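/- arXiv:2210.08486 — 3 statements merged into one kernel-verified Lean document; each statement's English description precedes it below -/
import Mathlib

section
/- Exponential supermartingale bound for sums of bounded adapted losses (intermediate claim in the proof of the online PAC-Bayes bound): Let (Ω, F, μ) be a probability space with a filtration (F_i)_{i=0,...,m}, F_0 trivial, and let X_1, ..., X_m be adapted random variables (X_i is F_i-measurable) with |X_i| ≤ K almost surely for each i. Then for every λ > 0, E[ exp( λ Σ_{i=1}^m ( E[X_i | F_{i-1}] − X_i ) ) ] ≤ exp( m λ² K² / 2 ). -/
open MeasureTheory ProbabilityTheory Real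

/-! On `[-K, K]` the convex function `x ↦ exp (-t x)` lies below its chord, which is affine in
`x`. Conditioning on `ℱ (i - 1)` therefore bounds `E[exp (-t Xᵢ) | ℱ (i - 1)]` by the chord
evaluated at `c = E[Xᵢ | ℱ (i - 1)]`, and `exp (t c)` times that value is the moment generating
function of the centred two-point variable with values `±K` and mean `c`, which Hoeffding's lemma
bounds by `exp (t² K² / 2)`. So each factor `exp (t (E[Xᵢ | ℱ (i - 1)] - Xᵢ))` has conditional
expectation given `ℱ (i - 1)` at most `exp (t² K² / 2)`; since the product of the first `m - 1`
factors is `ℱ (m - 1)`-measurable, the tower property gives the bound by induction on `m`. -/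

lemma exp_neg_mul_le_cosh_sub_mul_sinh {s u : ℝ} (hu : |u| ≤ 1) :
    exp (-s * u) ≤ cosh s - u * sinh s := by
  obtain ⟨hu₁, hu₂⟩ := abs_le.1 hu
  have h := convexOn_exp.2 (Set.mem_univ s) (Set.mem_univ (-s))
    (show 0 ≤ (1 - u) / 2 by linarith) (show 0 ≤ (1 + u) / 2 by linarith) (by ring)
  simp only [smul_eq_mul] at h
  calc exp (-s * u) = exp ((1 - u) / 2 * s + (1 + u) / 2 * -s) := by congr 1; ring
    _ ≤ (1 - u) / 2 * exp s + (1 + u) / 2 * exp (-s) := h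
    _ = cosh s - u * sinh s := by rw [cosh_eq, sinh_eq]; ring

lemma exp_mul_mul_cosh_sub_mul_sinh_le {s u : ℝ} (hu : |u| ≤ 1) :
    exp (s * u) * (cosh s - u * sinh s) ≤ exp (s ^ 2 / 2) := by
  obtain ⟨hu₁, hu₂⟩ := abs_le.1 hu
  -- the left side is the moment generating function at `-s` of the centred `±1` variable `X - u`
  let p : unitInterval := ⟨(1 + u) / 2, by constructor <;> linarith⟩
  let X : Bool → ℝ := fun b => if b then 1 else -1
  have hmean : ∫ b, X b ∂Ber(true, false, p) = u := by
    simp only [integral_bernoulliMeasure, p, X, if_true, Bool.false_eq_true, if_false,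
      smul_eq_mul]
    ring
  have h := (hasSubgaussianMGF_of_mem_Icc (μ := Ber(true, false, p)) (a := -1) (b := 1)
    (X := X) Measurable.of_discrete.aemeasurable
    (ae_of_all _ fun b => by cases b <;> simp [X])).mgf_le (-s)
  convert h using 1
  · simp only [mgf, integral_bernoulliMeasure, hmean, p, X, cosh_eq, sinh_eq, smul_eq_mul,
      if_true, Bool.false_eq_true, if_false]
    rw [show -s * (1 - u) = s * u + -s by ring, show -s * (-1 - u) = s * u + s by ring,
      exp_add, exp_add]
    ring
  · norm_num

-- For `K = 0` this holds because then `x = 0`, and `0 / 0 = 0`.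
lemma abs_div_le_one_and_mul_div_cancel {x K : ℝ} (hx : |x| ≤ K) :
    |x / K| ≤ 1 ∧ K * (x / K) = x := by
  rcases (abs_nonneg x).trans hx |>.eq_or_lt with rfl | hK
  · simp_all
  · exact ⟨by rwa [abs_div, abs_of_pos hK, div_le_one hK], mul_div_cancel₀ x hK.ne'⟩

/-- The chord of `x ↦ exp (-t x)` over `[-K, K]`. -/
noncomputable def hoeffdingChord (t K x : ℝ) : ℝ := cosh (t * K) - x / K * sinh (t * K)

lemma exp_neg_mul_le_hoeffdingChord {t K x : ℝ} (hx : |x| ≤ K) :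
    exp (-t * x) ≤ hoeffdingChord t K x := by
  obtain ⟨hu, hKx⟩ := abs_div_le_one_and_mul_div_cancel hx
  have h := exp_neg_mul_le_cosh_sub_mul_sinh (s := t * K) hu
  rwa [neg_mul, mul_assoc, hKx, ← neg_mul] at h

lemma exp_mul_mul_hoeffdingChord_le {t K x : ℝ} (hx : |x| ≤ K) :
    exp (t * x) * hoeffdingChord t K x ≤ exp (t ^ 2 * K ^ 2 / 2) := by
  obtain ⟨hu, hKx⟩ := abs_div_le_one_and_mul_div_cancel hx
  have h := exp_mul_mul_cosh_sub_mul_sinh_le (s := t * K) hu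
  rwa [mul_assoc, hKx, mul_pow] at h

section

variable {Ω : Type*} {m mΩ : MeasurableSpace Ω} {μ : Measure Ω}

lemma integrable_exp_mul_of_abs_le [IsFiniteMeasure μ] {X : Ω → ℝ} {C : ℝ}
    (hX : AEMeasurable X μ) (hC : ∀ᵐ ω ∂μ, |X ω| ≤ C) (t : ℝ) :
    Integrable (fun ω ↦ exp (t * X ω)) μ :=
  integrable_exp_mul_of_mem_Icc hX (hC.mono fun _ ↦ abs_le.1)

lemma ae_abs_sum_le {ι : Type*} {s : Finset ι} {X : ι → Ω → ℝ} {C : ℝ}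
    (hC : ∀ i ∈ s, ∀ᵐ ω ∂μ, |X i ω| ≤ C) :
    ∀ᵐ ω ∂μ, |∑ i ∈ s, X i ω| ≤ s.card * C := by
  filter_upwards [(Filter.eventually_all_finset s).2 hC] with ω h
  calc |∑ i ∈ s, X i ω| ≤ ∑ i ∈ s, |X i ω| := Finset.abs_sum_le_sum_abs _ _
    _ ≤ s.card * C := by simpa using Finset.sum_le_card_nsmul s _ C h

lemma ae_abs_condExp_sub_le {X : Ω → ℝ} {K : ℝ} (hK : ∀ᵐ ω ∂μ, |X ω| ≤ K) :
    ∀ᵐ ω ∂μ, |(μ[X | m]) ω - X ω| ≤ 2 * K := by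
  filter_upwards [ae_bdd_abs_condExp_of_ae_bdd_abs hK, hK] with ω hc hX
  linarith [abs_sub (μ[X | m] ω) (X ω)]

lemma condExp_hoeffdingChord [IsFiniteMeasure μ] (hm : m ≤ mΩ) {X : Ω → ℝ}
    (hX : Integrable X μ) (t K : ℝ) :
    μ[fun ω ↦ hoeffdingChord t K (X ω) | m] =ᵐ[μ] fun ω ↦ hoeffdingChord t K ((μ[X | m]) ω) := by
  have h : (fun ω ↦ hoeffdingChord t K (X ω))
      = (fun _ ↦ cosh (t * K)) - (sinh (t * K) / K) • X := by
    ext ω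
    simp only [hoeffdingChord, Pi.sub_apply, Pi.smul_apply, smul_eq_mul]
    ring
  rw [h]
  filter_upwards [condExp_sub (integrable_const _) (hX.smul (sinh (t * K) / K)) m,
    condExp_smul (sinh (t * K) / K) X m] with ω hsub hsmul
  rw [hsub, Pi.sub_apply, condExp_const hm, hsmul, Pi.smul_apply, smul_eq_mul, hoeffdingChord]
  ring

lemma condExp_exp_mul_condExp_sub_le [IsProbabilityMeasure μ] (hm : m ≤ mΩ) {X : Ω → ℝ}
    (hX : AEStronglyMeasurable X μ) {K : ℝ} (hK : ∀ᵐ ω ∂μ, |X ω| ≤ K) (t : ℝ) :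
    μ[fun ω ↦ exp (t * ((μ[X | m]) ω - X ω)) | m] ≤ᵐ[μ] fun _ ↦ exp (t ^ 2 * K ^ 2 / 2) := by
  set c := μ[X | m]
  let f := fun ω ↦ exp (t * c ω)
  let g := fun ω ↦ exp (-t * X ω)
  have hX_int : Integrable X μ := .of_bound hX K (by simpa only [Real.norm_eq_abs] using hK)
  have hg_int : Integrable g μ := integrable_exp_mul_of_abs_le hX.aemeasurable hK _
  have hsplit : (fun ω ↦ exp (t * (c ω - X ω))) = f * g := by
    ext ω
    simp only [Pi.mul_apply, f, g, ← exp_add]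
    congr 1; ring
  have hfg_int : Integrable (f * g) μ := hsplit ▸ integrable_exp_mul_of_abs_le
    (stronglyMeasurable_condExp.mono hm |>.aemeasurable.sub hX.aemeasurable)
    (ae_abs_condExp_sub_le hK) t
  have hpull : μ[f * g | m] =ᵐ[μ] f * μ[g | m] :=
    condExp_mul_of_stronglyMeasurable_left
      (continuous_exp.comp_stronglyMeasurable (stronglyMeasurable_condExp.const_mul t))
      hfg_int hg_int
  have hg_le : μ[g | m] ≤ᵐ[μ] μ[fun ω ↦ hoeffdingChord t K (X ω) | m] := by
    refine condExp_mono hg_int ?_ (hK.mono fun ω hω ↦ exp_neg_mul_le_hoeffdingChord hω)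
    exact (integrable_const _).sub ((hX_int.div_const K).mul_const _)
  rw [hsplit]
  filter_upwards [hpull, hg_le, condExp_hoeffdingChord hm hX_int t K,
    ae_bdd_abs_condExp_of_ae_bdd_abs hK] with ω hpull hg_le hchord hc
  calc (μ[f * g | m]) ω = f ω * (μ[g | m]) ω := hpull
    _ ≤ f ω * hoeffdingChord t K (c ω) :=
      mul_le_mul_of_nonneg_left (hchord ▸ hg_le) (exp_pos _).le
    _ ≤ exp (t ^ 2 * K ^ 2 / 2) := exp_mul_mul_hoeffdingChord_le hc

lemma integral_mul_le_of_condExp_le [IsFiniteMeasure μ] (hm : m ≤ mΩ) {f g : Ω → ℝ} {C : ℝ}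
    (hf : StronglyMeasurable[m] f) (hf_nonneg : ∀ ω, 0 ≤ f ω) (hf_int : Integrable f μ)
    (hg_int : Integrable g μ) (hfg_int : Integrable (fun ω ↦ f ω * g ω) μ)
    (hgC : μ[g | m] ≤ᵐ[μ] fun _ ↦ C) :
    ∫ ω, f ω * g ω ∂μ ≤ C * ∫ ω, f ω ∂μ := by
  have hpull : μ[f * g | m] =ᵐ[μ] f * μ[g | m] :=
    condExp_mul_of_stronglyMeasurable_left hf hfg_int hg_int
  calc ∫ ω, f ω * g ω ∂μ = ∫ ω, (μ[f * g | m]) ω ∂μ := (integral_condExp hm).symm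
    _ = ∫ ω, f ω * (μ[g | m]) ω ∂μ := integral_congr_ae hpull
    _ ≤ ∫ ω, f ω * C ∂μ := by
      refine integral_mono_ae (integrable_condExp.congr hpull) (hf_int.mul_const C) ?_
      filter_upwards [hgC] with ω hω
      exact mul_le_mul_of_nonneg_left hω (hf_nonneg ω)
    _ = C * ∫ ω, f ω ∂μ := by rw [integral_mul_const, mul_comm]

lemma integral_exp_mul_sum_le_of_condExp_le [IsProbabilityMeasure μ] {ℱ : Filtration ℕ mΩ}
    {D : ℕ → Ω → ℝ} {C t σ : ℝ} (n : ℕ)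
    (hD : ∀ i ∈ Finset.Icc 1 n, StronglyMeasurable[ℱ i] (D i))
    (hDC : ∀ i ∈ Finset.Icc 1 n, ∀ᵐ ω ∂μ, |D i ω| ≤ C)
    (hσ : ∀ i ∈ Finset.Icc 1 n,
      μ[fun ω ↦ exp (t * D i ω) | ℱ (i - 1)] ≤ᵐ[μ] fun _ ↦ exp σ) :
    ∫ ω, exp (t * ∑ i ∈ Finset.Icc 1 n, D i ω) ∂μ ≤ exp (n * σ) := by
  induction n with
  | zero => simp
  | succ n ih =>
    have hsub : Finset.Icc 1 n ⊆ Finset.Icc 1 (n + 1) := Finset.Icc_subset_Icc_right n.le_succ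
    have hlast : n + 1 ∈ Finset.Icc 1 (n + 1) := by simp
    have hS : StronglyMeasurable[ℱ n] fun ω ↦ ∑ i ∈ Finset.Icc 1 n, D i ω :=
      Finset.stronglyMeasurable_fun_sum _ fun i hi ↦
        (hD i (hsub hi)).mono (ℱ.mono (Finset.mem_Icc.1 hi).2)
    have hDμ : ∀ i ∈ Finset.Icc 1 (n + 1), AEMeasurable (D i) μ := fun i hi ↦
      ((hD i hi).mono (ℱ.le i)).measurable.aemeasurable
    have hsplit : ∀ ω, exp (t * ∑ i ∈ Finset.Icc 1 (n + 1), D i ω)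
        = exp (t * ∑ i ∈ Finset.Icc 1 n, D i ω) * exp (t * D (n + 1) ω) := fun ω ↦ by
      rw [Finset.sum_Icc_succ_top (Nat.le_add_left 1 n), mul_add, exp_add]
    have hFG_int : Integrable (fun ω ↦ exp (t * ∑ i ∈ Finset.Icc 1 (n + 1), D i ω)) μ :=
      integrable_exp_mul_of_abs_le (Finset.aemeasurable_fun_sum _ hDμ) (ae_abs_sum_le hDC) t
    calc ∫ ω, exp (t * ∑ i ∈ Finset.Icc 1 (n + 1), D i ω) ∂μ
        = ∫ ω, exp (t * ∑ i ∈ Finset.Icc 1 n, D i ω) * exp (t * D (n + 1) ω) ∂μ := by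
          simp only [hsplit]
      _ ≤ exp σ * ∫ ω, exp (t * ∑ i ∈ Finset.Icc 1 n, D i ω) ∂μ :=
          integral_mul_le_of_condExp_le (ℱ.le n)
            (continuous_exp.comp_stronglyMeasurable (hS.const_mul t)) (fun _ ↦ (exp_pos _).le)
            (integrable_exp_mul_of_abs_le (hS.mono (ℱ.le n)).measurable.aemeasurable
              (ae_abs_sum_le fun i hi ↦ hDC i (hsub hi)) t)
            (integrable_exp_mul_of_abs_le (hDμ _ hlast) (hDC _ hlast) t)
            (by simpa only [hsplit] using hFG_int) (hσ (n + 1) hlast)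
      _ ≤ exp σ * exp (n * σ) :=
          mul_le_mul_of_nonneg_left (ih (fun i hi ↦ hD i (hsub hi)) (fun i hi ↦ hDC i (hsub hi))
            (fun i hi ↦ hσ i (hsub hi))) (exp_pos _).le
      _ = exp ((n + 1 : ℕ) * σ) := by rw [← exp_add]; push_cast; congr 1; ring

end

theorem exp_supermartingale_bound_general {Ω : Type*} {mΩ : MeasurableSpace Ω} (μ : Measure Ω)
    [IsProbabilityMeasure μ] (m : ℕ) (ℱ : Filtration ℕ mΩ)
    (X : ℕ → Ω → ℝ) (hadap : ∀ i ∈ Finset.Icc 1 m, Measurable[ℱ i] (X i))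
    (K : ℝ) (hK : ∀ i ∈ Finset.Icc 1 m, ∀ᵐ ω ∂μ, |X i ω| ≤ K)
    (lam : ℝ) :
    ∫ ω, Real.exp (lam * ∑ i ∈ Finset.Icc 1 m, ((μ[X i | ℱ (i - 1)]) ω - X i ω)) ∂μ
      ≤ Real.exp (m * lam ^ 2 * K ^ 2 / 2) := by
  have hX : ∀ i ∈ Finset.Icc 1 m, AEStronglyMeasurable (X i) μ := fun i hi ↦
    ((hadap i hi).mono (ℱ.le i) le_rfl).aestronglyMeasurable
  calc _ ≤ exp (m * (lam ^ 2 * K ^ 2 / 2)) :=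
        integral_exp_mul_sum_le_of_condExp_le m
          (fun i hi ↦ (stronglyMeasurable_condExp.mono (ℱ.mono (Nat.sub_le i 1))).sub
            (hadap i hi).stronglyMeasurable)
          (fun i hi ↦ ae_abs_condExp_sub_le (hK i hi))
          (fun i hi ↦ condExp_exp_mul_condExp_sub_le (ℱ.le _) (hX i hi) (hK i hi) lam)
    _ = exp (m * lam ^ 2 * K ^ 2 / 2) := by congr 1; ring

/-- Exponential supermartingale bound for sums of bounded adapted losses. -/
theorem exp_supermartingale_bound {Ω : Type*} {mΩ : MeasurableSpace Ω} (μ : Measure Ω)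
    [IsProbabilityMeasure μ] (m : ℕ) (ℱ : Filtration ℕ mΩ) (hF0 : ℱ 0 = ⊥)
    (X : ℕ → Ω → ℝ) (hadap : ∀ i ∈ Finset.Icc 1 m, Measurable[ℱ i] (X i))
    (K : ℝ) (hK : ∀ i ∈ Finset.Icc 1 m, ∀ᵐ ω ∂μ, |X i ω| ≤ K)
    (lam : ℝ) (hlam : 0 < lam) :
    ∫ ω, Real.exp (lam * ∑ i ∈ Finset.Icc 1 m, ((μ[X i | ℱ (i - 1)]) ω - X i ω)) ∂μ
      ≤ Real.exp (m * lam ^ 2 * K ^ 2 / 2) :=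
  exp_supermartingale_bound_general μ m ℱ X hadap K hK lam
end

section
/- Gaussian expectation of the exponential bounded loss (corrected form of the paper's closed-form expression): Fix ε > 0, y ∈ ℝ, m ∈ ℝ and σ > 0, and define the bounded loss ℓ_exp(y, ŷ) = 1 − exp( −((y − ŷ)/ε)² ). If h is distributed according to the Gaussian measure on ℝ with mean m and variance σ², then E[ ℓ_exp(y, h) ] = 1 − (1 + 2σ²/ε²)^{−1/2} · exp( −(y − m)² / (2σ² + ε²) ). -/
open MeasureTheory ProbabilityTheory Real
open scoped NNReal

/-! Multiplying the Gaussian density by `exp (-b (x - c)²)` and completing the square in `x`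
leaves a Gaussian integrand of precision `(1 + 2bv)/v`, times a constant; the Gaussian integral
`∫ exp (-a x²) = √(π/a)` then gives `E[exp (-b (h - c)²)] = (1 + 2bv)^(-1/2) exp (-b (c - m)²/(1 + 2bv))`
for `h ~ 𝒩(m, v)`. The loss is `1 - exp (-b (h - y)²)` with `b = ε⁻²`. -/

lemma neg_sq_div_add_neg_mul_sq_eq {m c b v : ℝ} (hv : v ≠ 0) (h : 1 + 2 * b * v ≠ 0) (x : ℝ) :
    -(x - m) ^ 2 / (2 * v) + -b * (x - c) ^ 2
      = -b * (c - m) ^ 2 / (1 + 2 * b * v)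
        + -((1 + 2 * b * v) / (2 * v)) * (x - (m + 2 * b * v * c) / (1 + 2 * b * v)) ^ 2 := by
  have : 1 + 2 * v * b ≠ 0 := by rwa [mul_right_comm]
  field_simp
  ring

lemma integral_exp_neg_mul_sq_sub_gaussianReal (m c b : ℝ) (v : ℝ≥0) (h : 0 < 1 + 2 * b * v) :
    ∫ x, exp (-b * (x - c) ^ 2) ∂gaussianReal m v
      = (1 + 2 * b * v) ^ (-(1 / 2 : ℝ)) * exp (-b * (c - m) ^ 2 / (1 + 2 * b * v)) := by
  rcases eq_or_ne v 0 with rfl | hv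
  · simp [gaussianReal_zero_var, ← neg_sq (m - c)]
  have hv' : (v : ℝ) ≠ 0 := mod_cast hv
  set a := (1 + 2 * b * v) / (2 * v)
  have hpdf (x : ℝ) : gaussianPDFReal m v x • exp (-b * (x - c) ^ 2)
      = (√(2 * π * v))⁻¹ * exp (-b * (c - m) ^ 2 / (1 + 2 * b * v))
        * exp (-a * (x - (m + 2 * b * v * c) / (1 + 2 * b * v)) ^ 2) := by
    rw [gaussianPDFReal, smul_eq_mul, mul_assoc, ← exp_add,
      neg_sq_div_add_neg_mul_sq_eq hv' h.ne', exp_add, ← mul_assoc]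
  have hsqrt : √(π / a) / √(2 * π * v) = (1 + 2 * b * v) ^ (-(1 / 2 : ℝ)) := by
    rw [← sqrt_div' _ (by positivity), sqrt_eq_rpow, rpow_neg h.le, ← inv_rpow h.le]
    congr 1
    simp only [a]
    field_simp
  simp_rw [integral_gaussianReal_eq_integral_smul hv, hpdf]
  rw [integral_const_mul, integral_sub_right_eq_self (fun x => exp (-a * x ^ 2)),
    integral_gaussian, ← hsqrt]
  ring

theorem gaussian_exp_loss_general (ε y m σ : ℝ) (hε : 0 < ε) :
    ∫ h, (1 - Real.exp (-((y - h) / ε) ^ 2))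
        ∂(gaussianReal m ⟨σ ^ 2, sq_nonneg σ⟩)
      = 1 - (1 + 2 * σ ^ 2 / ε ^ 2) ^ (-(1 / 2 : ℝ))
          * Real.exp (-(y - m) ^ 2 / (2 * σ ^ 2 + ε ^ 2)) := by
  -- naming the variance as an `ℝ≥0` stops `⟨σ ^ 2, _⟩` being read as a bare subtype, which has no
  -- `IsProbabilityMeasure (gaussianReal m _)` instance
  set v : ℝ≥0 := ⟨σ ^ 2, sq_nonneg σ⟩
  have hv : (v : ℝ) = σ ^ 2 := rfl
  have hloss (h : ℝ) : -((y - h) / ε) ^ 2 = -(ε ^ 2)⁻¹ * (h - y) ^ 2 := by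
    rw [div_pow, ← neg_sq (h - y)]
    ring
  have hint : Integrable (fun h => exp (-(ε ^ 2)⁻¹ * (h - y) ^ 2)) (gaussianReal m v) :=
    (integrable_const 1).mono' (by fun_prop) (.of_forall fun h => by
      rw [norm_of_nonneg (exp_pos _).le, exp_le_one_iff, neg_mul]
      exact neg_nonpos.2 (by positivity))
  have hb : 0 < 1 + 2 * (ε ^ 2)⁻¹ * v := by positivity
  simp_rw [hloss]
  rw [integral_sub (integrable_const 1) hint, integral_const, probReal_univ, one_smul,
    integral_exp_neg_mul_sq_sub_gaussianReal m y _ _ hb, hv]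
  congr 3
  · ring
  · field_simp
    ring

/-- Gaussian expectation of the exponential bounded loss
`ℓ_exp(y, ŷ) = 1 − exp(−((y − ŷ)/ε)²)`. -/
theorem gaussian_exp_loss (ε y m σ : ℝ) (hε : 0 < ε) (hσ : 0 < σ) :
    ∫ h, (1 - Real.exp (-((y - h) / ε) ^ 2))
        ∂(gaussianReal m ⟨σ ^ 2, sq_nonneg σ⟩)
      = 1 - (1 + 2 * σ ^ 2 / ε ^ 2) ^ (-(1 / 2 : ℝ))
          * Real.exp (-(y - m) ^ 2 / (2 * σ ^ 2 + ε ^ 2)) :=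
  gaussian_exp_loss_general ε y m σ hε
end

section
/- Gaussian expectation of the clipped squared bounded loss (corrected form of the paper's closed-form expression): Fix ε > 0, y ∈ ℝ, m ∈ ℝ and σ > 0, and define the bounded loss ℓ_2(y, ŷ) = min{ ((y − ŷ)/ε)², 1 }. If h is distributed according to the Gaussian measure on ℝ with mean m and variance σ², then E[ ℓ_2(y, h) ] = 1 + ( ((y − m)² + σ²)/ε² − 1 ) · ( Φ((y + ε − m)/σ) − Φ((y − ε − m)/σ) ) + (σ / (√(2π) ε²)) · ( (y − ε − m) · exp( −(y + ε − m)²/(2σ²) ) − (y + ε − m) · exp( −(y − ε − m)²/(2σ²) ) ). -/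
/-!
On `[y - ε, y + ε]` the loss is `((y - h) / ε)²` and elsewhere it is `1`, so the expectation is
`1 + ∫_{y-ε}^{y+ε} p(h) (((y - h) / ε)² - 1) dh` for the Gaussian density `p`. Since
`p'(h) = -(h - m) p(h) / σ²`, the function
`((y - m)² + σ²) Φ((h - m) / σ) + σ² (2y - m - h) p(h)` is an antiderivative of `p(h) (y - h)²`,
and the closed form is read off at the endpoints.
-/

open MeasureTheory ProbabilityTheory Real

/-- The standard normal cumulative distribution function
`Φ(z) = ∫_{−∞}^z (2π)^{−1/2} e^{−t²/2} dt`. -/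
noncomputable def stdNormalCDF (z : ℝ) : ℝ :=
  ∫ t in Set.Iic z, (Real.sqrt (2 * Real.pi))⁻¹ * Real.exp (-t ^ 2 / 2)

open Set NNReal

lemma continuous_gaussianPDFReal (m : ℝ) (v : ℝ≥0) : Continuous (gaussianPDFReal m v) := by
  simp only [gaussianPDFReal_def]
  fun_prop

lemma stdNormalCDF_eq_integral_gaussianPDFReal (z : ℝ) :
    stdNormalCDF z = ∫ t in Iic z, gaussianPDFReal 0 1 t := by
  simp [stdNormalCDF, gaussianPDFReal_def]

lemma hasDerivAt_stdNormalCDF (z : ℝ) : HasDerivAt stdNormalCDF (gaussianPDFReal 0 1 z) z := by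
  have hint := integrable_gaussianPDFReal 0 1
  have hcont := continuous_gaussianPDFReal 0 1
  have hshift :
      stdNormalCDF = fun w ↦ stdNormalCDF 0 + ∫ t in (0 : ℝ)..w, gaussianPDFReal 0 1 t := by
    funext w
    rw [stdNormalCDF_eq_integral_gaussianPDFReal, stdNormalCDF_eq_integral_gaussianPDFReal,
      ← intervalIntegral.integral_Iic_sub_Iic hint.integrableOn hint.integrableOn]
    ring
  rw [hshift]
  exact (intervalIntegral.integral_hasDerivAt_right hint.intervalIntegrable
    (hcont.stronglyMeasurableAtFilter _ _) hcont.continuousAt).const_add _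

lemma hasDerivAt_stdNormalCDF_sub_div_sqrt (m : ℝ) {v : ℝ≥0} (hv : v ≠ 0) (x : ℝ) :
    HasDerivAt (fun x ↦ stdNormalCDF ((x - m) / √v)) (gaussianPDFReal m v x) x := by
  have hs : 0 < √(v : ℝ) := Real.sqrt_pos.2 (by positivity)
  have := (hasDerivAt_stdNormalCDF ((x - m) / √v)).comp x
    (((hasDerivAt_id x).sub_const m).div_const √v)
  refine this.congr_deriv ?_
  rw [div_eq_inv_mul, gaussianPDFReal_inv_mul hs.ne', gaussianPDFReal_sub]
  simp only [abs_of_pos hs, mul_zero, zero_add, zero_le_coe, Real.sq_sqrt, mk_coe, mul_one,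
    one_div]
  field_simp

lemma hasDerivAt_gaussianPDFReal (m : ℝ) (v : ℝ≥0) (x : ℝ) :
    HasDerivAt (gaussianPDFReal m v) (-(x - m) / v * gaussianPDFReal m v x) x := by
  have hexponent : HasDerivAt (fun x ↦ -(x - m) ^ 2 / (2 * v)) (-(x - m) / v) x := by
    refine ((((hasDerivAt_id x).sub_const m).pow 2).neg.div_const (2 * (v : ℝ))).congr_deriv ?_
    simp only [id]
    ring
  rw [gaussianPDFReal_def]
  exact (hexponent.exp.const_mul _).congr_deriv (by ring)

lemma hasDerivAt_gaussian_sq_antideriv (y m : ℝ) {v : ℝ≥0} (hv : v ≠ 0) (x : ℝ) :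
    HasDerivAt
      (fun x ↦ ((y - m) ^ 2 + v) * stdNormalCDF ((x - m) / √v)
        + v * (2 * y - m - x) * gaussianPDFReal m v x)
      (gaussianPDFReal m v x * (y - x) ^ 2) x := by
  have hv' : (v : ℝ) ≠ 0 := by exact_mod_cast hv
  have := ((hasDerivAt_stdNormalCDF_sub_div_sqrt m hv x).const_mul ((y - m) ^ 2 + v)).add
    ((((hasDerivAt_id x).const_sub (2 * y - m)).const_mul (v : ℝ)).mul
      (hasDerivAt_gaussianPDFReal m v x))
  refine this.congr_deriv ?_
  simp only [id]
  field_simp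
  ring

lemma coe_mul_gaussianPDFReal (m : ℝ) (v : ℝ≥0) (x : ℝ) :
    v * gaussianPDFReal m v x = √v / √(2 * π) * exp (-(x - m) ^ 2 / (2 * v)) := by
  rw [gaussianPDFReal_def, Real.sqrt_mul (by positivity)]
  rcases eq_or_ne v 0 with rfl | hv
  · simp
  · have hs : 0 < √(v : ℝ) := Real.sqrt_pos.2 (by positivity)
    nth_rw 1 [← Real.mul_self_sqrt v.coe_nonneg]
    field_simp

lemma min_sq_div_one_eq_one_add_indicator {ε : ℝ} (hε : 0 < ε) (y x : ℝ) :
    min (((y - x) / ε) ^ 2) 1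
      = 1 + (Icc (y - ε) (y + ε)).indicator (fun x ↦ ((y - x) / ε) ^ 2 - 1) x := by
  have hmem : ((y - x) / ε) ^ 2 ≤ 1 ↔ x ∈ Icc (y - ε) (y + ε) := by
    rw [sq_le_one_iff_abs_le_one, abs_div, abs_of_pos hε, div_le_one hε, abs_sub_le_iff, mem_Icc]
    constructor <;> rintro ⟨h₁, h₂⟩ <;> constructor <;> linarith
  by_cases hx : x ∈ Icc (y - ε) (y + ε)
  · rw [indicator_of_mem hx, min_eq_left (hmem.2 hx)]
    ring
  · rw [indicator_of_notMem hx, min_eq_right (le_of_not_ge (mt hmem.1 hx))]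
    ring

lemma integral_mul_min_sq_div_one {p : ℝ → ℝ} (hp : Continuous p) (hpi : Integrable p)
    {ε : ℝ} (hε : 0 < ε) (y : ℝ) :
    ∫ x, p x * min (((y - x) / ε) ^ 2) 1
      = (∫ x, p x) + ∫ x in (y - ε)..(y + ε), p x * (((y - x) / ε) ^ 2 - 1) := by
  have hind :
      Integrable ((Icc (y - ε) (y + ε)).indicator fun x ↦ p x * (((y - x) / ε) ^ 2 - 1)) :=
    (Continuous.integrableOn_Icc (by fun_prop)).integrable_indicator measurableSet_Icc
  simp_rw [min_sq_div_one_eq_one_add_indicator hε, mul_add, mul_one, ← indicator_mul_right]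
  rw [integral_add hpi hind, integral_indicator measurableSet_Icc, integral_Icc_eq_integral_Ioc,
    ← intervalIntegral.integral_of_le (by linarith)]

lemma integral_gaussianPDFReal_mul_sq_div_sub_one (y m ε a b : ℝ) {v : ℝ≥0} (hv : v ≠ 0) :
    ∫ x in a..b, gaussianPDFReal m v x * (((y - x) / ε) ^ 2 - 1)
      = (((y - m) ^ 2 + v) / ε ^ 2 - 1)
          * (stdNormalCDF ((b - m) / √v) - stdNormalCDF ((a - m) / √v))
        + ((2 * y - m - b) * (v * gaussianPDFReal m v b)
          - (2 * y - m - a) * (v * gaussianPDFReal m v a)) / ε ^ 2 := by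
  have hderiv (x : ℝ) : HasDerivAt
      (fun x ↦ (((y - m) ^ 2 + v) * stdNormalCDF ((x - m) / √v)
        + v * (2 * y - m - x) * gaussianPDFReal m v x) / ε ^ 2 - stdNormalCDF ((x - m) / √v))
      (gaussianPDFReal m v x * (((y - x) / ε) ^ 2 - 1)) x :=
    (((hasDerivAt_gaussian_sq_antideriv y m hv x).div_const _).sub
      (hasDerivAt_stdNormalCDF_sub_div_sqrt m hv x)).congr_deriv (by ring)
  rw [intervalIntegral.integral_eq_sub_of_hasDerivAt (fun x _ ↦ hderiv x)
    (((continuous_gaussianPDFReal m v).mul (by fun_prop)).intervalIntegrable a b)]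
  ring

/-- Gaussian expectation of the clipped squared bounded loss
`ℓ_2(y, ŷ) = min{((y − ŷ)/ε)², 1}` (corrected form of the paper's expression). -/
theorem gaussian_clipped_sq_loss (ε y m σ : ℝ) (hε : 0 < ε) (hσ : 0 < σ) :
    ∫ h, min (((y - h) / ε) ^ 2) 1 ∂(gaussianReal m ⟨σ ^ 2, sq_nonneg σ⟩)
      = 1 + (((y - m) ^ 2 + σ ^ 2) / ε ^ 2 - 1)
            * (stdNormalCDF ((y + ε - m) / σ) - stdNormalCDF ((y - ε - m) / σ))
        + (σ / (Real.sqrt (2 * Real.pi) * ε ^ 2))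
            * ((y - ε - m) * Real.exp (-(y + ε - m) ^ 2 / (2 * σ ^ 2))
              - (y + ε - m) * Real.exp (-(y - ε - m) ^ 2 / (2 * σ ^ 2))) := by
  set v : ℝ≥0 := ⟨σ ^ 2, sq_nonneg σ⟩
  have hv : v ≠ 0 := fun h ↦ hσ.ne' (pow_eq_zero_iff two_ne_zero |>.1 (congrArg Subtype.val h))
  have hcoe : (v : ℝ) = σ ^ 2 := rfl
  have hsqrt : √(v : ℝ) = σ := by rw [hcoe, Real.sqrt_sq hσ.le]
  rw [integral_gaussianReal_eq_integral_smul hv]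
  simp_rw [smul_eq_mul]
  rw [integral_mul_min_sq_div_one (continuous_gaussianPDFReal m v)
      (integrable_gaussianPDFReal m v) hε,
    integral_gaussianPDFReal_eq_one m hv, integral_gaussianPDFReal_mul_sq_div_sub_one y m ε _ _ hv,
    coe_mul_gaussianPDFReal, coe_mul_gaussianPDFReal, hsqrt, hcoe]
  field_simp
  ring
end
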